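/- For every real m×n matrix A and every integer c ≥ 2, herwdisc(A, 2) ≤ c · herdisc(A, c). -/

import Mathlib

/-! Round `z` to a `c`-adic fraction `a / c ^ K` (error `O(c ^ (-K))`) and then remove one
`c`-adic digit at a time. If every entry of a vector `x` is `a / c ^ (k + 1)` or
`(a + 1) / c ^ (k + 1)`, write `a = c b + r`, `c`-color each of the two level sets with
discrepancy at most `H = herdisc(A, c)`, and round `r` (resp. `r + 1`) of the colour classes up
to `(b + 1) / c ^ k` and the others down to `b / c ^ k`. On the second level set the error is
bounded through the `c - r - 1` classes rounded down, because the errors of all `c` classes add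
up to zero; so one step costs at most `(c - 1) H / c ^ k` per row. Summing over `k` gives
`c H (1 - c ^ (-K))`, and `K → ∞` gives `c H`. -/

open Finset

/-- `c`-color discrepancy of a matrix: minimum over `c`-colorings `p` of the columns of the
maximum over colors `d` and rows `i` of `|∑_{j : p j = d} A i j - (1/c) ∑_j A i j|`. -/
noncomputable def mdisc {ι κ : Type*} [Fintype ι] [Fintype κ] (A : ι → κ → ℝ) (c : ℕ) : ℝ :=
  ⨅ p : κ → Fin c, ⨆ d : Fin c, ⨆ i : ι,
    |∑ j ∈ Finset.univ.filter (fun j => p j = d), A i j - (1 / (c : ℝ)) * ∑ j, A i j|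

/-- hereditary `c`-color discrepancy: maximum of `mdisc` over all nonempty column submatrices. -/
noncomputable def mherdisc {ι : Type*} [Fintype ι] {n : ℕ} (A : ι → Fin n → ℝ) (c : ℕ) : ℝ :=
  ⨆ J : {J : Finset (Fin n) // J.Nonempty}, mdisc (fun i (j : {x // x ∈ J.1}) => A i j.1) c

/-- `d_A(p,q) = max_i |∑_j a_{ij} (p j - q j)|` for floating colorings `p, q`. -/
noncomputable def dA {ι κ : Type*} [Fintype ι] [Fintype κ] (A : ι → κ → ℝ) (p q : κ → ℝ) : ℝ :=
  ⨆ i : ι, |∑ j, A i j * (p j - q j)|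

/-- weighted discrepancy with weight `z`: min over `{0,1}`-colorings `q` of `d_A(z·1, q)`. -/
noncomputable def wdisc {ι κ : Type*} [Fintype ι] [Fintype κ] (A : ι → κ → ℝ) (z : ℝ) : ℝ :=
  ⨅ q : κ → Bool, dA A (fun _ => z) (fun j => if q j then 1 else 0)

/-- `wdisc(A,2) = sup_{z ∈ [0,1]} wdisc(A,z)`. -/
noncomputable def wdisc2 {ι κ : Type*} [Fintype ι] [Fintype κ] (A : ι → κ → ℝ) : ℝ :=
  ⨆ z : Set.Icc (0:ℝ) 1, wdisc A z

/-- hereditary weighted discrepancy in two colors. -/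
noncomputable def mherwdisc2 {ι : Type*} [Fintype ι] {n : ℕ} (A : ι → Fin n → ℝ) : ℝ :=
  ⨆ J : {J : Finset (Fin n) // J.Nonempty}, wdisc2 (fun i (j : {x // x ∈ J.1}) => A i j.1)

open Filter Topology

variable {ι κ : Type*}

def IsHerdiscBound (A : ι → κ → ℝ) (c : ℕ) (H : ℝ) : Prop :=
  ∀ D : Finset κ, ∃ p : κ → Fin c, ∀ i d,
    |∑ j ∈ D with p j = d, A i j - (1 / (c : ℝ)) * ∑ j ∈ D, A i j| ≤ H

section Colorings

variable [Fintype ι] [Fintype κ]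

lemma mdisc_nonneg (A : ι → κ → ℝ) (c : ℕ) : 0 ≤ mdisc A c :=
  Real.iInf_nonneg fun _ => Real.iSup_nonneg fun _ => Real.iSup_nonneg fun _ => abs_nonneg _

lemma exists_coloring_le_mdisc (A : ι → κ → ℝ) {c : ℕ} (hc : 0 < c) :
    ∃ p : κ → Fin c, ∀ i d,
      |∑ j with p j = d, A i j - (1 / (c : ℝ)) * ∑ j, A i j| ≤ mdisc A c := by
  have : Nonempty (Fin c) := ⟨⟨0, hc⟩⟩
  obtain ⟨p, hp⟩ := exists_eq_ciInf_of_finite (f := fun p : κ → Fin c => ⨆ d : Fin c, ⨆ i : ι,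
    |∑ j with p j = d, A i j - (1 / (c : ℝ)) * ∑ j, A i j|)
  refine ⟨p, fun i d => ?_⟩
  rw [mdisc, ← hp]
  exact le_ciSup_of_le (Set.finite_range _).bddAbove d <|
    le_ciSup (f := fun i => |∑ j with p j = d, A i j - (1 / (c : ℝ)) * ∑ j, A i j|)
      (Set.finite_range _).bddAbove i

lemma mherdisc_nonneg {n : ℕ} (A : ι → Fin n → ℝ) (c : ℕ) : 0 ≤ mherdisc A c :=
  Real.iSup_nonneg fun _ => mdisc_nonneg _ _

lemma mdisc_le_mherdisc {n : ℕ} (A : ι → Fin n → ℝ) (c : ℕ) {J : Finset (Fin n)}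
    (hJ : J.Nonempty) : mdisc (fun i (j : J) => A i j) c ≤ mherdisc A c :=
  le_ciSup (f := fun J : {J : Finset (Fin n) // J.Nonempty} => mdisc (fun i (j : J.1) => A i j) c)
    (Set.finite_range _).bddAbove ⟨J, hJ⟩

lemma isHerdiscBound_mherdisc {n : ℕ} (A : ι → Fin n → ℝ) {c : ℕ} (hc : 0 < c) :
    IsHerdiscBound A c (mherdisc A c) := by
  intro D
  rcases D.eq_empty_or_nonempty with rfl | hD
  · exact ⟨fun _ => ⟨0, hc⟩, fun _ _ => by simpa using mherdisc_nonneg A c⟩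
  obtain ⟨p, hp⟩ := exists_coloring_le_mdisc (fun i (j : D) => A i j) hc
  refine ⟨fun j => if h : j ∈ D then p ⟨j, h⟩ else ⟨0, hc⟩, fun i d => ?_⟩
  refine le_trans (le_of_eq ?_) ((hp i d).trans (mdisc_le_mherdisc A c hD))
  rw [← sum_coe_sort D, sum_filter, sum_filter, ← sum_coe_sort D]
  simp

end Colorings

lemma sum_mul_card_div_sub_indicator {c : ℕ} (f : κ → ℝ) (D : Finset κ) (p : κ → Fin c)
    (S : Finset (Fin c)) :
    ∑ j ∈ D, f j * ((#S : ℝ) / c - if p j ∈ S then 1 else 0) =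
      ∑ d ∈ S, ((1 / (c : ℝ)) * ∑ j ∈ D, f j - ∑ j ∈ D with p j = d, f j) := by
  have hfiber : ∑ d ∈ S, ∑ j ∈ D with p j = d, f j = ∑ j ∈ D, if p j ∈ S then f j else 0 := by
    simp_rw [sum_filter]
    rw [sum_comm]
    exact sum_congr rfl fun j _ => sum_ite_eq S (p j) fun _ => f j
  rw [sum_sub_distrib, hfiber, sum_const, nsmul_eq_mul, mul_sum, mul_sum, ← sum_sub_distrib]
  refine sum_congr rfl fun j _ => ?_
  split_ifs <;> ring

section Rounding

variable {A : ι → κ → ℝ} {c : ℕ} {H : ℝ}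

lemma IsHerdiscBound.exists_bool_abs_sum_le_mul (hA : IsHerdiscBound A c H) (D : Finset κ) {s : ℕ}
    (hs : s ≤ c) : ∃ u : κ → Bool, ∀ i,
      |∑ j ∈ D, A i j * ((s : ℝ) / c - if u j then 1 else 0)| ≤ s * H := by
  obtain ⟨p, hp⟩ := hA D
  obtain ⟨S, -, hS⟩ := exists_subset_card_eq (s := (univ : Finset (Fin c))) (by simpa using hs)
  refine ⟨fun j => decide (p j ∈ S), fun i => ?_⟩
  simp only [decide_eq_true_eq]
  rw [← hS, sum_mul_card_div_sub_indicator]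
  calc _ ≤ ∑ d ∈ S, |(1 / (c : ℝ)) * ∑ j ∈ D, A i j - ∑ j ∈ D with p j = d, A i j| :=
        abs_sum_le_sum_abs _ _
    _ ≤ #S • H := sum_le_card_nsmul _ _ _ fun d _ => by
        rw [abs_sub_comm]
        exact hp i d
    _ = #S * H := nsmul_eq_mul _ _

lemma IsHerdiscBound.exists_bool_abs_sum_le_sub_mul (hA : IsHerdiscBound A c H) (hc : 0 < c)
    (D : Finset κ) {s : ℕ} (hs : s ≤ c) : ∃ u : κ → Bool, ∀ i,
      |∑ j ∈ D, A i j * ((s : ℝ) / c - if u j then 1 else 0)| ≤ (c - s) * H := by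
  obtain ⟨u, hu⟩ := hA.exists_bool_abs_sum_le_mul D (Nat.sub_le c s)
  refine ⟨fun j => !u j, fun i => ?_⟩
  have hflip : ∑ j ∈ D, A i j * ((s : ℝ) / c - if !u j then 1 else 0) =
      -∑ j ∈ D, A i j * (((c - s : ℕ) : ℝ) / c - if u j then 1 else 0) := by
    rw [← sum_neg_distrib]
    refine sum_congr rfl fun j _ => ?_
    rw [Nat.cast_sub hs]
    cases u j <;>
      simp only [Bool.not_false, Bool.not_true, Bool.false_eq_true, ↓reduceIte, sub_zero] <;>
      field_simp <;> ring
  rw [hflip, abs_neg, ← Nat.cast_sub hs]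
  exact hu i

lemma IsHerdiscBound.exists_bool_abs_sum_digit_le (hA : IsHerdiscBound A c H) (J : Finset κ)
    (e : κ → Bool) {r : ℕ} (hr : r < c) : ∃ u : κ → Bool, ∀ i,
      |∑ j ∈ J, A i j * (((r : ℝ) + if e j then 1 else 0) / c - if u j then 1 else 0)|
        ≤ (c - 1) * H := by
  obtain ⟨u₀, hu₀⟩ := hA.exists_bool_abs_sum_le_mul (J.filter fun j => ¬e j = true) hr.le
  obtain ⟨u₁, hu₁⟩ :=
    hA.exists_bool_abs_sum_le_sub_mul (Nat.zero_lt_of_lt hr) (J.filter fun j => e j = true) hr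
  refine ⟨fun j => if e j then u₁ j else u₀ j, fun i => ?_⟩
  rw [← sum_filter_add_sum_filter_not J fun j => e j = true]
  have hsum₁ : ∑ j ∈ J with e j = true,
      A i j * (((r : ℝ) + if e j then 1 else 0) / c - if (if e j then u₁ j else u₀ j) then 1 else 0)
      = ∑ j ∈ J with e j = true, A i j * (((r + 1 : ℕ) : ℝ) / c - if u₁ j then 1 else 0) :=
    sum_congr rfl fun j hj => by simp [(mem_filter.1 hj).2]
  have hsum₀ : ∑ j ∈ J with ¬e j = true,
      A i j * (((r : ℝ) + if e j then 1 else 0) / c - if (if e j then u₁ j else u₀ j) then 1 else 0)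
      = ∑ j ∈ J with ¬e j = true, A i j * ((r : ℝ) / c - if u₀ j then 1 else 0) :=
    sum_congr rfl fun j hj => by simp [(mem_filter.1 hj).2]
  rw [hsum₁, hsum₀]
  calc _ ≤ _ := abs_add_le _ _
    _ ≤ (c - (r + 1 : ℕ)) * H + r * H := add_le_add (hu₁ i) (hu₀ i)
    _ = (c - 1) * H := by push_cast; ring

lemma IsHerdiscBound.exists_bool_abs_sum_le_of_lt_pow (hA : IsHerdiscBound A c H) (hc : 0 < c)
    (J : Finset κ) (K : ℕ) : ∀ a < c ^ K, ∀ e : κ → Bool, ∃ q : κ → Bool, ∀ i,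
      |∑ j ∈ J, A i j * (((a : ℝ) + if e j then 1 else 0) / c ^ K - if q j then 1 else 0)|
        ≤ c * H * (1 - (1 / c : ℝ) ^ K) := by
  induction K with
  | zero =>
    intro a ha e
    obtain rfl : a = 0 := by simpa using ha
    exact ⟨e, fun i => by simp⟩
  | succ K ih =>
    intro a ha e
    obtain ⟨e', he'⟩ := hA.exists_bool_abs_sum_digit_le J e (Nat.mod_lt a hc)
    obtain ⟨q, hq⟩ := ih (a / c) (Nat.div_lt_of_lt_mul (pow_succ' c K ▸ ha)) e'
    refine ⟨q, fun i => ?_⟩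
    have ha' : (a : ℝ) = c * (a / c : ℕ) + (a % c : ℕ) := by
      exact_mod_cast (Nat.div_add_mod a c).symm
    have hsplit : ∑ j ∈ J, A i j * (((a : ℝ) + if e j then 1 else 0) / c ^ (K + 1) -
          if q j then 1 else 0) =
        1 / c ^ K * ∑ j ∈ J, A i j *
            ((((a % c : ℕ) : ℝ) + if e j then 1 else 0) / c - if e' j then 1 else 0) +
          ∑ j ∈ J, A i j * ((((a / c : ℕ) : ℝ) + if e' j then 1 else 0) / c ^ K -
            if q j then 1 else 0) := by
      rw [mul_sum, ← sum_add_distrib]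
      refine sum_congr rfl fun j _ => ?_
      rw [ha']
      field_simp
      ring
    rw [hsplit]
    calc _ ≤ _ := abs_add_le _ _
      _ ≤ 1 / c ^ K * ((c - 1) * H) + c * H * (1 - (1 / c : ℝ) ^ K) := by
        rw [abs_mul, abs_of_pos (by positivity)]
        exact add_le_add (mul_le_mul_of_nonneg_left (he' i) (by positivity)) (hq i)
      _ = c * H * (1 - (1 / c : ℝ) ^ (K + 1)) := by
        rw [one_div_pow, one_div_pow]
        field_simp
        ring

end Rounding

section WeightedDiscrepancy

variable [Fintype ι] {A : ι → κ → ℝ} {c : ℕ} {H : ℝ}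

lemma IsHerdiscBound.wdisc_le_add (hA : IsHerdiscBound A c H) (hH : 0 ≤ H) (hc : 0 < c)
    (J : Finset κ) {z : ℝ} (hz₀ : 0 ≤ z) (hz₁ : z ≤ 1) (K : ℕ) :
    wdisc (fun i (j : J) => A i j) z
      ≤ c * H * (1 - (1 / c : ℝ) ^ K) + 2 * (∑ i, |∑ j ∈ J, A i j|) * (1 / c : ℝ) ^ K := by
  set N : ℝ := (c : ℝ) ^ K with hN
  have hN₁ : 1 ≤ N := one_le_pow₀ (by exact_mod_cast hc)
  have hN₀ : 0 < N := zero_lt_one.trans_le hN₁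
  -- `N - 1` rather than `N` keeps `a < c ^ K` also for `z = 1`.
  set a := ⌊z * (N - 1)⌋₊
  have ha : a < c ^ K := by
    rw [Nat.floor_lt (by nlinarith)]
    push_cast
    nlinarith
  have ha_le : (a : ℝ) ≤ z * (N - 1) := Nat.floor_le (by nlinarith)
  have ha_gt : z * (N - 1) < a + 1 := Nat.lt_floor_add_one _
  have hround : |z - a / N| ≤ 2 * (1 / c : ℝ) ^ K := by
    rw [one_div_pow, ← hN, show z - a / N = (z * N - a) / N by field_simp, abs_div,
      abs_of_pos hN₀, mul_one_div]
    exact div_le_div_of_nonneg_right (abs_le.2 ⟨by linarith, by linarith⟩) hN₀.le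
  obtain ⟨q, hq⟩ := hA.exists_bool_abs_sum_le_of_lt_pow hc J K a ha fun _ => false
  simp only [Bool.false_eq_true, ↓reduceIte, add_zero] at hq
  have hpow : 0 ≤ 1 - (1 / c : ℝ) ^ K := sub_nonneg.2 (pow_le_one₀ (by positivity)
    (div_le_one_of_le₀ (by exact_mod_cast hc) (by positivity)))
  refine (ciInf_le (Set.finite_range _).bddBelow fun j : J => q j).trans <|
    Real.iSup_le (fun i => ?_) (by positivity)
  have hsplit : ∑ j : J, A i j * (z - if q j then 1 else 0) =
      (∑ j ∈ J, A i j) * (z - a / N) + ∑ j ∈ J, A i j * ((a : ℝ) / N - if q j then 1 else 0) := by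
    rw [sum_coe_sort J fun j => A i j * (z - if q j then 1 else 0), sum_mul, ← sum_add_distrib]
    exact sum_congr rfl fun j _ => by ring
  have hrow : |∑ j ∈ J, A i j| ≤ ∑ i, |∑ j ∈ J, A i j| :=
    single_le_sum (f := fun i => |∑ j ∈ J, A i j|) (fun _ _ => abs_nonneg _) (mem_univ i)
  rw [hsplit]
  calc _ ≤ _ := abs_add_le _ _
    _ ≤ (∑ i, |∑ j ∈ J, A i j|) * (2 * (1 / c : ℝ) ^ K) + c * H * (1 - (1 / c : ℝ) ^ K) := by
      rw [abs_mul]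
      exact add_le_add (mul_le_mul hrow hround (abs_nonneg _) (by positivity)) (hq i)
    _ = _ := by ring

lemma IsHerdiscBound.wdisc_le (hA : IsHerdiscBound A c H) (hH : 0 ≤ H) (hc : 1 < c)
    (J : Finset κ) {z : ℝ} (hz₀ : 0 ≤ z) (hz₁ : z ≤ 1) :
    wdisc (fun i (j : J) => A i j) z ≤ c * H := by
  have hgeom : Tendsto (fun K => (1 / c : ℝ) ^ K) atTop (𝓝 0) :=
    tendsto_pow_atTop_nhds_zero_of_lt_one (by positivity) ((div_lt_one (by positivity)).2
      (by exact_mod_cast hc))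
  have hlim : Tendsto (fun K => c * H * (1 - (1 / c : ℝ) ^ K) +
      2 * (∑ i, |∑ j ∈ J, A i j|) * (1 / c : ℝ) ^ K) atTop (𝓝 (c * H)) := by
    simpa using ((hgeom.const_sub 1).const_mul (c * H)).add
      (hgeom.const_mul (2 * ∑ i, |∑ j ∈ J, A i j|))
  exact ge_of_tendsto' hlim (hA.wdisc_le_add hH (by omega) J hz₀ hz₁)

end WeightedDiscrepancy

theorem herwdisc_le_c_mul_herdisc_general {m n : ℕ}
    (A : Fin m → Fin n → ℝ) (c : ℕ) (hc : 2 ≤ c) :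
    mherwdisc2 A ≤ (c : ℝ) * mherdisc A c := by
  have hH := mherdisc_nonneg A c
  have hA := isHerdiscBound_mherdisc A (by omega : 0 < c)
  exact Real.iSup_le (fun J => Real.iSup_le (fun z => hA.wdisc_le hH (by omega) J.1 z.2.1 z.2.2)
    (by positivity)) (by positivity)

/-- For every real m×n matrix A and every integer c ≥ 2, herwdisc(A, 2) ≤ c · herdisc(A, c). -/
theorem herwdisc_le_c_mul_herdisc {m n : ℕ} (hm : 0 < m) (hn : 0 < n)
    (A : Fin m → Fin n → ℝ) (c : ℕ) (hc : 2 ≤ c) :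
    mherwdisc2 A ≤ (c : ℝ) * mherdisc A c :=
  herwdisc_le_c_mul_herdisc_general A c hc
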